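/- For constants e₀ > 0, k > 0 and adiabatic index γ with 1 < γ ≤ 5/3, the polytropic specific enthalpy h(n) = e₀ + (γk/(γ−1))·n^{γ−1} on (0,∞) satisfies: (F1) h(n) → e₀ as n → 0; (F2) the squared sound speed v_s(n)² := n h'(n)/h(n) satisfies 0 < v_s(n)² < 1 for all n > 0; and (F3) the logarithmic derivative W(n) := n v_s'(n)/v_s(n) satisfies W(n) = (γ−1)/(2·(1 + γk n^{γ−1}/((γ−1)e₀))) and hence 0 ≤ W(n) ≤ 1/3 for all n > 0. -/

import Mathlib

open Real Filter Set Topology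

theorem stmt_17 (e₀ k γ : ℝ) (he₀ : 0 < e₀) (hk : 0 < k)
    (hγ1 : 1 < γ) (hγ2 : γ ≤ 5 / 3)
    (h vs W : ℝ → ℝ)
    (hh : ∀ n : ℝ, h n = e₀ + γ * k / (γ - 1) * n ^ (γ - 1))
    (hvs : ∀ n : ℝ, vs n = Real.sqrt (n * deriv h n / h n))
    (hW : ∀ n : ℝ, W n = n * deriv vs n / vs n) :
    Filter.Tendsto h (nhdsWithin 0 (Set.Ioi 0)) (nhds e₀) ∧
    (∀ n > (0:ℝ), 0 < n * deriv h n / h n ∧ n * deriv h n / h n < 1) ∧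
    (∀ n > (0:ℝ),
      W n = (γ - 1) / (2 * (1 + γ * k * n ^ (γ - 1) / ((γ - 1) * e₀))) ∧
      0 ≤ W n ∧ W n ≤ 1 / 3) := by
  have hγ' : 0 < γ - 1 := by linarith
  have hγne : γ - 1 ≠ 0 := ne_of_gt hγ'
  have hγ0 : 0 < γ := by linarith
  have hcpos : 0 < γ * k / (γ - 1) := by positivity
  have hfun : h = fun x => e₀ + γ * k / (γ - 1) * x ^ (γ - 1) := funext hh
  -- positivity of h
  have hhpos : ∀ x : ℝ, 0 < x → 0 < h x := by
    intro x hx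
    rw [hh x]
    have := Real.rpow_pos_of_pos hx (γ - 1)
    positivity
  -- derivative of h
  have hhx : ∀ x : ℝ, 0 < x → HasDerivAt h (γ * k / (γ - 1) * ((γ - 1) * x ^ (γ - 2))) x := by
    intro x hx
    have h1 : HasDerivAt (fun y : ℝ => y ^ (γ - 1)) ((γ - 1) * x ^ (γ - 1 - 1)) x :=
      Real.hasDerivAt_rpow_const (Or.inl (ne_of_gt hx))
    have h2 := (h1.const_mul (γ * k / (γ - 1))).const_add e₀
    rw [hfun]
    convert h2 using 2
    rfl
    rfl
    ring_nf
  have hderiv : ∀ x : ℝ, 0 < x → deriv h x = γ * k / (γ - 1) * ((γ - 1) * x ^ (γ - 2)) :=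
    fun x hx => (hhx x hx).deriv
  have hmul : ∀ x : ℝ, 0 < x → x * x ^ (γ - 2) = x ^ (γ - 1) := by
    intro x hx
    rw [show γ - 1 = 1 + (γ - 2) by ring, Real.rpow_add hx, Real.rpow_one]
  refine ⟨?_, ?_, ?_⟩
  · -- limit
    have h0 : Tendsto (fun x : ℝ => x ^ (γ - 1)) (nhds 0) (nhds ((0:ℝ) ^ (γ - 1))) :=
      (Real.continuousAt_rpow_const 0 (γ - 1) (Or.inr hγ'.le)).tendsto
    rw [Real.zero_rpow hγne] at h0
    have h1 := (h0.const_mul (γ * k / (γ - 1))).const_add e₀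
    rw [hfun]
    simpa using h1.mono_left nhdsWithin_le_nhds
  · intro n hn
    have hu : 0 < n ^ (γ - 1) := Real.rpow_pos_of_pos hn _
    have hv : 0 < n ^ (γ - 2) := Real.rpow_pos_of_pos hn _
    have hhn := hhpos n hn
    rw [hderiv n hn]
    constructor
    · positivity
    · rw [div_lt_one hhn, hh n]
      have key : n * (γ * k / (γ - 1) * ((γ - 1) * n ^ (γ - 2))) = γ * k * n ^ (γ - 1) := by
        rw [← hmul n hn]; field_simp
      rw [key]
      have hlt : γ * k < γ * k / (γ - 1) := by
        rw [lt_div_iff₀ hγ']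
        nlinarith [mul_pos (mul_pos hγ0 hk) (show (0:ℝ) < 2 - γ by linarith)]
      nlinarith [mul_lt_mul_of_pos_right hlt hu]
  · intro n hn
    have hu : 0 < n ^ (γ - 1) := Real.rpow_pos_of_pos hn _
    have hhn := hhpos n hn
    set G : ℝ → ℝ := fun x => γ * k * x ^ (γ - 1) / (e₀ + γ * k / (γ - 1) * x ^ (γ - 1)) with hG
    have hGpos : ∀ x : ℝ, 0 < x → 0 < G x := by
      intro x hx
      have hux : 0 < x ^ (γ - 1) := Real.rpow_pos_of_pos hx _
      have : 0 < e₀ + γ * k / (γ - 1) * x ^ (γ - 1) := by positivity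
      positivity
    -- vs agrees with sqrt ∘ G on Ioi 0
    have hvsG : vs =ᶠ[nhds n] fun x => Real.sqrt (G x) := by
      filter_upwards [isOpen_Ioi.mem_nhds hn] with x hx
      have hx' : (0:ℝ) < x := hx
      rw [hvs x, hderiv x hx', hh x, hG]
      congr 2
      rw [← hmul x hx']
      field_simp
    -- derivative of G at n
    have hNn : HasDerivAt (fun x : ℝ => γ * k * x ^ (γ - 1)) (γ * k * ((γ - 1) * n ^ (γ - 2))) n :=
      by
      have h1 : HasDerivAt (fun y : ℝ => y ^ (γ - 1)) ((γ - 1) * n ^ (γ - 1 - 1)) n :=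
        Real.hasDerivAt_rpow_const (Or.inl (ne_of_gt hn))
      convert h1.const_mul (γ * k) using 2
      rfl
      rfl
      ring_nf
    have hDn : HasDerivAt (fun x : ℝ => e₀ + γ * k / (γ - 1) * x ^ (γ - 1))
        (γ * k / (γ - 1) * ((γ - 1) * n ^ (γ - 2))) n := by
      have := hhx n hn
      rwa [hfun] at this
    have hdne : e₀ + γ * k / (γ - 1) * n ^ (γ - 1) ≠ 0 := by
      have := hhn; rw [hh n] at this; exact ne_of_gt this
    have hGd : HasDerivAt G
        ((γ * k * ((γ - 1) * n ^ (γ - 2)) * (e₀ + γ * k / (γ - 1) * n ^ (γ - 1)) -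
          γ * k * n ^ (γ - 1) * (γ * k / (γ - 1) * ((γ - 1) * n ^ (γ - 2)))) /
          (e₀ + γ * k / (γ - 1) * n ^ (γ - 1)) ^ 2) n := hNn.div hDn hdne
    have hGn : 0 < G n := hGpos n hn
    have hsq : HasDerivAt (fun x => Real.sqrt (G x))
        ((γ * k * ((γ - 1) * n ^ (γ - 2)) * (e₀ + γ * k / (γ - 1) * n ^ (γ - 1)) -
          γ * k * n ^ (γ - 1) * (γ * k / (γ - 1) * ((γ - 1) * n ^ (γ - 2)))) /
          (e₀ + γ * k / (γ - 1) * n ^ (γ - 1)) ^ 2 / (2 * Real.sqrt (G n))) n :=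
      hGd.sqrt (ne_of_gt hGn)
    have hdvs : deriv vs n =
        (γ * k * ((γ - 1) * n ^ (γ - 2)) * (e₀ + γ * k / (γ - 1) * n ^ (γ - 1)) -
          γ * k * n ^ (γ - 1) * (γ * k / (γ - 1) * ((γ - 1) * n ^ (γ - 2)))) /
          (e₀ + γ * k / (γ - 1) * n ^ (γ - 1)) ^ 2 / (2 * Real.sqrt (G n)) := by
      rw [hvsG.deriv_eq, hsq.deriv]
    have hvsn : vs n = Real.sqrt (G n) := by
      rw [hvs n, hderiv n hn, hh n, hG]
      congr 2
      rw [← hmul n hn]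
      field_simp
    have hsqrtpos : 0 < Real.sqrt (G n) := Real.sqrt_pos.mpr hGn
    have hss : Real.sqrt (G n) * Real.sqrt (G n) = G n := Real.mul_self_sqrt hGn.le
    have hWn : W n = (γ - 1) / (2 * (1 + γ * k * n ^ (γ - 1) / ((γ - 1) * e₀))) := by
      rw [hW n, hdvs, hvsn]
      have hv : n ^ (γ - 2) = n ^ (γ - 1) / n := by
        rw [show γ - 2 = γ - 1 - 1 by ring, Real.rpow_sub hn, Real.rpow_one]
      have hrew : ∀ A d : ℝ, n * (A / d ^ 2 / (2 * Real.sqrt (G n))) / Real.sqrt (G n)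
          = n * A / d ^ 2 / (2 * (Real.sqrt (G n) * Real.sqrt (G n))) := by
        intro A d; ring
      rw [hrew, hss, hG]
      rw [hv]
      have hd2 : (e₀ + γ * k / (γ - 1) * n ^ (γ - 1)) ^ 2 ≠ 0 := pow_ne_zero _ hdne
      field_simp
      ring
    refine ⟨hWn, ?_, ?_⟩
    · rw [hWn]
      have : 0 < 1 + γ * k * n ^ (γ - 1) / ((γ - 1) * e₀) := by positivity
      positivity
    · rw [hWn]
      have hc : 0 < 1 + γ * k * n ^ (γ - 1) / ((γ - 1) * e₀) := by positivity
      have ht : 0 ≤ γ * k * n ^ (γ - 1) / ((γ - 1) * e₀) := by positivity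
      rw [div_le_div_iff₀ (by positivity) (by norm_num)]
      linarith
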